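/- arXiv:1111.5214 — 2 statements merged into one kernel-verified Lean document; each statement's English description precedes it below -/
import Mathlib

section
/- Suppose there exist constants M ≥ 0, α ∈ ℝ, and 1 ≤ q < 2 such that F(k,u) ≤ α|u|^q for all k ∈ Z[1,N] and |u| > M, and min_k p(k) > 0. Then J is coercive on E. -/
open Finset

/-- forward difference operator -/
def dd (x : ℤ → ℝ) : ℤ → ℝ := fun i => x (i + 1) - x i

/-- extension of `v : Fin N → ℝ` to a function on `ℤ` supported on `Z[1,N]`
(thus vanishing on `Z[1-n,0] ∪ Z[N+1,N+n]`); this realizes the space `E`. -/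
noncomputable def extendE (N : ℕ) (v : Fin N → ℝ) : ℤ → ℝ := fun i =>
  if h : 0 ≤ i - 1 ∧ (i - 1).toNat < N then v ⟨(i - 1).toNat, h.2⟩ else 0

/-- the norm of the space `E`: `‖x‖ = (∑_{k=1}^N x(k)²)^{1/2}` -/
noncomputable def normE (N : ℕ) (v : Fin N → ℝ) : ℝ :=
  Real.sqrt (∑ k ∈ Finset.Icc (1 : ℤ) (N : ℤ), (extendE N v k) ^ 2)

/-- `F(k,s) = ∫₀ˢ f(k,t) dt` -/
noncomputable def Ffun (f : ℤ → ℝ → ℝ) (k : ℤ) (s : ℝ) : ℝ := ∫ t in (0 : ℝ)..s, f k t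

/-- the action functional `J` -/
noncomputable def Jfun (n N : ℕ) (p : ℤ → ℝ) (F : ℤ → ℝ → ℝ) (v : Fin N → ℝ) : ℝ :=
  ∑ k ∈ Finset.Icc (1 - (n : ℤ)) (N : ℤ),
    ((1 / 2 : ℝ) * p k * (dd^[n] (extendE N v) k) ^ 2 - F k (extendE N v k))

/-- `v` solves the discrete BVP
`Δⁿ(p(k-n)Δⁿx(k-n)) + (-1)^{n+1} f(k,x(k)) = 0`, `k ∈ Z[1,N]`,
with the Dirichlet boundary conditions built into `extendE`. -/
def Solves (n N : ℕ) (p : ℤ → ℝ) (f : ℤ → ℝ → ℝ) (v : Fin N → ℝ) : Prop :=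
  ∀ k ∈ Finset.Icc (1 : ℤ) (N : ℤ),
    dd^[n] (fun j => p j * dd^[n] (extendE N v) j) (k - n)
      + (-1 : ℝ) ^ (n + 1) * f k (extendE N v k) = 0

/-- coercivity: `J(x) → +∞` as `‖x‖ → ∞` -/
def CoerciveE (N : ℕ) (J : (Fin N → ℝ) → ℝ) : Prop :=
  ∀ C : ℝ, ∃ R : ℝ, ∀ v : Fin N → ℝ, R ≤ normE N v → C ≤ J v

/-- anti-coercivity: `J(x) → −∞` as `‖x‖ → ∞` -/
def AntiCoerciveE (N : ℕ) (J : (Fin N → ℝ) → ℝ) : Prop :=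
  ∀ C : ℝ, ∃ R : ℝ, ∀ v : Fin N → ℝ, R ≤ normE N v → J v ≤ C

/-!
The quadratic part of `J` dominates `(pmin * lam / 2) ‖x‖²` by the Poincaré-type inequality,
while on each of the finitely many sites `F(k, x(k))` is at most `|α| ‖x‖^q` plus an upper bound
of the continuous `F(k, ·)` on the compact `[-M, M]`. Hence `J x ≥ c ‖x‖² - a ‖x‖^q - b` with
`c > 0` and `q < 2`.
-/

open Filter

lemma tendsto_mul_sq_sub_mul_rpow_sub_atTop {c q : ℝ} (a b : ℝ) (hc : 0 < c) (hq0 : 0 < q)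
    (hq2 : q < 2) : Tendsto (fun r : ℝ => c * r ^ 2 - a * r ^ q - b) atTop atTop := by
  have h : Tendsto (fun r : ℝ => r ^ q * (c * r ^ (2 - q) - a) - b) atTop atTop :=
    tendsto_atTop_add_const_right _ _ <| (tendsto_rpow_atTop hq0).atTop_mul_atTop₀ <|
      tendsto_atTop_add_const_right _ _ <| (tendsto_rpow_atTop (by linarith)).const_mul_atTop hc
  refine h.congr' ?_
  filter_upwards [eventually_gt_atTop 0] with r hr
  have hsplit : r ^ (2 : ℕ) = r ^ q * r ^ (2 - q) := by
    rw [← Real.rpow_add hr, ← Real.rpow_natCast]; norm_num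
  rw [hsplit]; ring

lemma le_abs_mul_rpow_add_of_le {f : ℝ → ℝ} {M α q B u r : ℝ} (hq : 0 ≤ q)
    (hB : ∀ u, |u| ≤ M → f u ≤ B) (hf : ∀ u, M < |u| → f u ≤ α * |u| ^ q) (hu : |u| ≤ r) :
    f u ≤ |α| * r ^ q + max B 0 := by
  have hrq : 0 ≤ |α| * r ^ q := by positivity [(abs_nonneg u).trans hu]
  rcases le_or_gt |u| M with hM | hM
  · linarith [hB u hM, le_max_left B 0]
  · calc f u ≤ α * |u| ^ q := hf u hM
      _ ≤ |α| * r ^ q := by gcongr; exact le_abs_self α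
      _ ≤ |α| * r ^ q + max B 0 := le_add_of_nonneg_right (le_max_right B 0)

lemma coerciveE_of_le {N : ℕ} {J : (Fin N → ℝ) → ℝ} {g : ℝ → ℝ} (hg : Tendsto g atTop atTop)
    (hJ : ∀ v, g (normE N v) ≤ J v) : CoerciveE N J := by
  intro C
  obtain ⟨R, hR⟩ := eventually_atTop.mp (hg.eventually_ge_atTop C)
  exact ⟨R, fun v hv => (hR _ hv).trans (hJ v)⟩

section normE

variable {N : ℕ} (v : Fin N → ℝ)

lemma extendE_eq_zero_of_notMem {k : ℤ} (hk : k ∉ Icc (1 : ℤ) N) : extendE N v k = 0 := by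
  rw [extendE, dif_neg]
  rintro ⟨h0, hN⟩
  exact hk (mem_Icc.mpr ⟨by omega, by omega⟩)

lemma sq_normE : normE N v ^ 2 = ∑ k ∈ Icc (1 : ℤ) N, extendE N v k ^ 2 :=
  Real.sq_sqrt (sum_nonneg fun _ _ => sq_nonneg _)

lemma abs_extendE_le_normE (k : ℤ) : |extendE N v k| ≤ normE N v := by
  by_cases hk : k ∈ Icc (1 : ℤ) N
  · rw [← Real.sqrt_sq_eq_abs]
    exact Real.sqrt_le_sqrt (single_le_sum (fun i _ => sq_nonneg (extendE N v i)) hk)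
  · rw [extendE_eq_zero_of_notMem v hk, abs_zero]
    exact Real.sqrt_nonneg _

lemma mul_sq_normE_le_sum_dd_sq {n : ℕ} {p : ℤ → ℝ} {pmin lam : ℝ} (hpmin : 0 ≤ pmin)
    (hp : ∀ k ∈ Icc (1 - (n : ℤ)) N, pmin ≤ p k)
    (hpoin : lam * ∑ k ∈ Icc (1 : ℤ) N, extendE N v k ^ 2
      ≤ ∑ k ∈ Icc (1 - (n : ℤ)) N, (dd^[n] (extendE N v) k) ^ 2) :
    pmin * lam / 2 * normE N v ^ 2
      ≤ ∑ k ∈ Icc (1 - (n : ℤ)) N, 1 / 2 * p k * (dd^[n] (extendE N v) k) ^ 2 :=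
  calc pmin * lam / 2 * normE N v ^ 2
      = pmin / 2 * (lam * ∑ k ∈ Icc (1 : ℤ) N, extendE N v k ^ 2) := by rw [sq_normE]; ring
    _ ≤ pmin / 2 * ∑ k ∈ Icc (1 - (n : ℤ)) N, (dd^[n] (extendE N v) k) ^ 2 := by gcongr
    _ ≤ ∑ k ∈ Icc (1 - (n : ℤ)) N, 1 / 2 * p k * (dd^[n] (extendE N v) k) ^ 2 := by
      rw [mul_sum]; gcongr with k hk; linarith [hp k hk]

end normE

theorem stmt8_general (n N : ℕ) (p : ℤ → ℝ)
    (F : ℤ → ℝ → ℝ) (hF : ∀ k, Continuous (F k))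
    (pmin : ℝ) (hpmin : 0 < pmin)
    (hp : ∀ k ∈ Finset.Icc (1 - (n : ℤ)) (N : ℤ), pmin ≤ p k)
    (lam : ℝ) (hlam : 0 < lam)
    (hpoin : ∀ v : Fin N → ℝ,
      lam * ∑ k ∈ Finset.Icc (1 : ℤ) (N : ℤ), (extendE N v k) ^ 2
        ≤ ∑ k ∈ Finset.Icc (1 - (n : ℤ)) (N : ℤ), (dd^[n] (extendE N v) k) ^ 2)
    (M α : ℝ) (q : ℝ) (hM : 0 ≤ M) (hq1 : 1 ≤ q) (hq2 : q < 2)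
    (hFle : ∀ k ∈ Finset.Icc (1 : ℤ) (N : ℤ), ∀ u : ℝ, M < |u| → F k u ≤ α * |u| ^ q) :
    CoerciveE N (Jfun n N p F) := by
  set s := Icc (1 - (n : ℤ)) N
  choose B hB using fun k => (isCompact_Icc (a := -M) (b := M)).bddAbove_image (hF k).continuousOn
  have hFbound : ∀ k, ∀ u, |u| ≤ M → F k u ≤ B k := fun k u hu =>
    hB k (Set.mem_image_of_mem _ (abs_le.mp hu))
  refine coerciveE_of_le (tendsto_mul_sq_sub_mul_rpow_sub_atTop (#s * |α|)
    (∑ k ∈ s, max (B k) 0) (by positivity : 0 < pmin * lam / 2) (by linarith) hq2) fun v => ?_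
  set r := normE N v
  have hterm : ∀ k ∈ s, F k (extendE N v k) ≤ |α| * r ^ q + max (B k) 0 := by
    intro k _
    by_cases hk : k ∈ Icc (1 : ℤ) N
    · exact le_abs_mul_rpow_add_of_le (by linarith) (hFbound k) (hFle k hk)
        (abs_extendE_le_normE v k)
    · rw [extendE_eq_zero_of_notMem v hk]
      have : 0 ≤ |α| * r ^ q := by positivity [(abs_nonneg _).trans (abs_extendE_le_normE v k)]
      linarith [hFbound k 0 (by simpa using hM), le_max_left (B k) 0]
  have hpot : ∑ k ∈ s, F k (extendE N v k) ≤ #s * |α| * r ^ q + ∑ k ∈ s, max (B k) 0 :=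
    (sum_le_sum hterm).trans_eq (by rw [sum_add_distrib, sum_const, nsmul_eq_mul, mul_assoc])
  rw [Jfun, sum_sub_distrib]
  linarith [mul_sq_normE_le_sum_dd_sq v hpmin.le hp (hpoin v)]

theorem stmt8 (n N : ℕ) (hn : 1 ≤ n) (hN : 2 ≤ N) (p : ℤ → ℝ)
    (F : ℤ → ℝ → ℝ) (hF : ∀ k, Continuous (F k))
    (pmin : ℝ) (hpmin : 0 < pmin)
    (hp : ∀ k ∈ Finset.Icc (1 - (n : ℤ)) (N : ℤ), pmin ≤ p k)
    (lam : ℝ) (hlam : 0 < lam)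
    (hpoin : ∀ v : Fin N → ℝ,
      lam * ∑ k ∈ Finset.Icc (1 : ℤ) (N : ℤ), (extendE N v k) ^ 2
        ≤ ∑ k ∈ Finset.Icc (1 - (n : ℤ)) (N : ℤ), (dd^[n] (extendE N v) k) ^ 2)
    (M α : ℝ) (q : ℝ) (hM : 0 ≤ M) (hq1 : 1 ≤ q) (hq2 : q < 2)
    (hFle : ∀ k ∈ Finset.Icc (1 : ℤ) (N : ℤ), ∀ u : ℝ, M < |u| → F k u ≤ α * |u| ^ q) :
    CoerciveE N (Jfun n N p F) :=
  stmt8_general n N p F hF pmin hpmin hp lam hlam hpoin M α q hM hq1 hq2 hFle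
end

section
/- Suppose there exists α > 0 such that x·f(k,x) ≥ 0 for all k ∈ Z[1,N] and |x| > α, and max_k p(k) < 0. Then J is anti-coercive on E (J(x) → −∞ as ‖x‖ → ∞), and the boundary value problem has at least one solution. -/
/-! Because the boundary conditions let one recover `x` from `Δⁿx` by forward substitution,
`x ↦ Δⁿx` is injective on `E`, so `∑ (Δⁿx)² ≥ λ‖x‖²` for some `λ > 0` and the quadratic part of
`J` is at most `(max p) λ ‖x‖² / 2 < 0`. The sign condition makes each `F(k, ·)` increase on
`[α, ∞)` and decrease on `(-∞, -α]`, hence bounded below. Therefore `J → -∞`, `J` attains a global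
maximum, and at the maximiser every partial derivative of `J` vanishes; summation by parts turns
these equations into the difference equation. -/

open Finset

lemma Finset.exists_lt_forall_le_of_forall_lt {ι α : Type*} [LinearOrder α] [NoMinOrder α]
    {s : Finset ι} {g : ι → α} {b : α} (h : ∀ k ∈ s, g k < b) : ∃ c < b, ∀ k ∈ s, g k ≤ c := by
  rcases s.eq_empty_or_nonempty with rfl | hs
  · obtain ⟨c, hc⟩ := exists_lt b
    exact ⟨c, hc, by simp⟩
  · exact ⟨s.sup' hs g, (sup'_lt_iff hs).2 h, fun k hk => le_sup' g hk⟩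

def ddₗ : Module.End ℝ (ℤ → ℝ) where
  toFun := dd
  map_add' := fwdDiff_add 1
  map_smul' := fwdDiff_const_smul 1

lemma coe_ddₗ_pow (n : ℕ) : ⇑(ddₗ ^ n) = dd^[n] := Module.End.coe_pow ddₗ n

lemma iterate_dd_apply (n : ℕ) (x : ℤ → ℝ) (k : ℤ) :
    dd^[n] x k = ∑ i ∈ range (n + 1), (-1 : ℝ) ^ (n - i) * n.choose i * x (k + i) := by
  rw [show dd = fwdDiff 1 from rfl, fwdDiff_iter_eq_sum_shift]
  refine sum_congr rfl fun i _ => ?_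
  simp [zsmul_eq_mul]

lemma iterate_dd_eq_of_eq_zero {n : ℕ} {x : ℤ → ℝ} {k : ℤ} (hx : ∀ i < n, x (k + i) = 0) :
    dd^[n] x k = x (k + n) := by
  rw [iterate_dd_apply, sum_range_succ, sum_eq_zero fun i hi => by
    rw [hx i (mem_range.1 hi), mul_zero]]
  simp

/-- Forward substitution: `Δⁿx(i - n) = x i` once `x` is known to vanish below `i`. -/
lemma eq_zero_of_iterate_dd_eq_zero {n : ℕ} {x : ℤ → ℝ} {M : ℤ} (hx : ∀ i ≤ 0, x i = 0)
    (h : ∀ k ∈ Icc (1 - (n : ℤ)) M, dd^[n] x k = 0) : ∀ i ≤ M, x i = 0 := by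
  suffices H : ∀ m : ℕ, ∀ i : ℤ, i ≤ m → i ≤ M → x i = 0 from
    fun i hi => H i.toNat i (Int.self_le_toNat i) hi
  intro m
  induction m with
  | zero => exact fun i hi _ => hx i hi
  | succ m ih =>
    intro i hi hiM
    rcases le_or_gt i m with him | him
    · exact ih i him hiM
    rcases le_or_gt i 0 with hi0 | hi0
    · exact hx i hi0
    have hshift : dd^[n] x (i - n) = x i := by
      rw [iterate_dd_eq_of_eq_zero fun l hl => ih _ (by omega) (by omega), sub_add_cancel]
    rw [← hshift]
    exact h _ (mem_Icc.2 ⟨by omega, by omega⟩)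

lemma sum_mul_iterate_dd_single (n : ℕ) (h : ℤ → ℝ) {a b c : ℤ} (hb : b + n ≤ a) (hc : a ≤ c) :
    ∑ k ∈ Icc b c, h k * dd^[n] (Pi.single a 1) k = (-1 : ℝ) ^ n * dd^[n] h (a - n) := by
  set coef : ℕ → ℝ := fun i => (-1 : ℝ) ^ (n - i) * n.choose i
  have hlhs : ∀ k, h k * dd^[n] (Pi.single a 1) k
      = ∑ i ∈ range (n + 1), if k = a - i then coef i * h k else 0 := by
    intro k
    rw [iterate_dd_apply, mul_sum]
    refine sum_congr rfl fun i _ => ?_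
    by_cases hk : k = a - i
    · rw [if_pos hk, hk, sub_add_cancel, Pi.single_eq_same]; ring
    · rw [if_neg hk, Pi.single_eq_of_ne (by omega), mul_zero, mul_zero]
  have hinner : ∀ i ∈ range (n + 1),
      (∑ k ∈ Icc b c, if k = a - i then coef i * h k else 0) = coef i * h (a - i) := by
    intro i hi
    have hin : i ≤ n := Nat.lt_succ_iff.1 (mem_range.1 hi)
    rw [sum_ite_eq' _ _ (fun k => coef i * h k), if_pos (mem_Icc.2 ⟨by omega, by omega⟩)]
  rw [sum_congr rfl fun k _ => hlhs k, sum_comm, sum_congr rfl hinner, iterate_dd_apply, mul_sum,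
    ← sum_range_reflect _ (n + 1)]
  refine sum_congr rfl fun i hi => ?_
  have hin : i ≤ n := Nat.lt_succ_iff.1 (mem_range.1 hi)
  rw [add_tsub_cancel_right, show a - ((n - i : ℕ) : ℤ) = a - n + i by omega]
  have hsign : (-1 : ℝ) ^ n * (-1) ^ (n - i) = (-1) ^ i := by
    obtain ⟨m, rfl⟩ : ∃ m, n = i + m := ⟨n - i, by omega⟩
    rw [Nat.add_sub_cancel_left, pow_add, mul_assoc, ← pow_add, Even.neg_one_pow ⟨m, rfl⟩, mul_one]
  simp only [coef, Nat.sub_sub_self hin, Nat.choose_symm hin]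
  linear_combination (-(n.choose i : ℝ) * h (a - n + i)) * hsign

noncomputable def extendₗ (N : ℕ) : (Fin N → ℝ) →ₗ[ℝ] (ℤ → ℝ) where
  toFun := extendE N
  map_add' v w := by
    funext i
    simp only [extendE, Pi.add_apply]
    split_ifs <;> simp
  map_smul' c v := by
    funext i
    simp only [extendE, Pi.smul_apply, RingHom.id_apply]
    split_ifs <;> simp

lemma coe_extendₗ (N : ℕ) : ⇑(extendₗ N) = extendE N := rfl

lemma extendE_of_nonpos (N : ℕ) (v : Fin N → ℝ) {i : ℤ} (hi : i ≤ 0) : extendE N v i = 0 := by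
  rw [extendE, dif_neg]; omega

lemma extendE_coe_add_one (N : ℕ) (v : Fin N → ℝ) (j : Fin N) :
    extendE N v ((j : ℤ) + 1) = v j := by
  rw [extendE, dif_pos (by omega)]
  congr 1; ext; simp

lemma extendE_single (N : ℕ) (j : Fin N) :
    extendE N (Pi.single j 1) = Pi.single ((j : ℤ) + 1) 1 := by
  funext i
  by_cases hi : i = (j : ℤ) + 1
  · rw [hi, extendE_coe_add_one, Pi.single_eq_same, Pi.single_eq_same]
  rw [Pi.single_eq_of_ne hi, extendE]
  split_ifs with h
  · exact Pi.single_eq_of_ne (fun hj => hi (by rw [← hj]; simp only [Int.pred_toNat]; omega)) _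
  · rfl

lemma sum_Icc_eq_sum_fin (N : ℕ) (g : ℤ → ℝ) :
    ∑ k ∈ Icc (1 : ℤ) N, g k = ∑ j : Fin N, g ((j : ℤ) + 1) := by
  refine (sum_bij (fun (j : Fin N) _ => (j : ℤ) + 1)
    (fun j _ => mem_Icc.2 ⟨by omega, by have := j.isLt; omega⟩)
    (fun j _ j' _ h => Fin.ext (by simpa using h)) (fun k hk => ?_) fun _ _ => rfl).symm
  obtain ⟨hk1, hkN⟩ := mem_Icc.1 hk
  exact ⟨⟨(k - 1).toNat, by omega⟩, mem_univ _, by simp only [Int.pred_toNat]; omega⟩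

lemma normE_eq_norm (N : ℕ) (v : Fin N → ℝ) : normE N v = ‖WithLp.toLp 2 v‖ := by
  rw [normE, EuclideanSpace.norm_eq, sum_Icc_eq_sum_fin]
  simp [extendE_coe_add_one]

lemma norm_le_normE (N : ℕ) (v : Fin N → ℝ) : ‖v‖ ≤ normE N v := by
  rw [normE_eq_norm]
  exact pi_norm_le_iff_of_nonneg (norm_nonneg _) |>.2 fun j =>
    PiLp.norm_apply_le (WithLp.toLp 2 v) j

lemma exists_pos_mul_norm_sq_le_of_injective {E F : Type*} [NormedAddCommGroup E]
    [NormedSpace ℝ E] [FiniteDimensional ℝ E] [NormedAddCommGroup F] [NormedSpace ℝ F]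
    (B : E →ₗ[ℝ] F) (hB : Function.Injective B) : ∃ c > 0, ∀ w, c * ‖w‖ ^ 2 ≤ ‖B w‖ ^ 2 := by
  obtain ⟨K, hK, hanti⟩ := B.injective_iff_antilipschitz.1 hB
  refine ⟨((K : ℝ) ^ 2)⁻¹, by positivity, fun w => ?_⟩
  rw [inv_mul_le_iff₀ (by positivity), ← mul_pow]
  exact pow_le_pow_left₀ (norm_nonneg w) (hanti.le_mul_norm (map_zero B) w) 2

lemma exists_pos_mul_normE_sq_le (n N : ℕ) : ∃ c > 0, ∀ v : Fin N → ℝ,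
    c * normE N v ^ 2 ≤ ∑ k ∈ Icc (1 - (n : ℤ)) N, (dd^[n] (extendE N v) k) ^ 2 := by
  set s := Icc (1 - (n : ℤ)) N
  let B : EuclideanSpace ℝ (Fin N) →ₗ[ℝ] EuclideanSpace ℝ s :=
    (WithLp.linearEquiv 2 ℝ (s → ℝ)).symm.toLinearMap ∘ₗ LinearMap.funLeft ℝ ℝ Subtype.val ∘ₗ
      (ddₗ ^ n) ∘ₗ extendₗ N ∘ₗ (WithLp.linearEquiv 2 ℝ (Fin N → ℝ)).toLinearMap
  have hB : ∀ w, B w = WithLp.toLp 2 fun k : s => dd^[n] (extendE N w.ofLp) k := fun w => by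
    rw [← coe_ddₗ_pow]; rfl
  have hBinj : Function.Injective B := by
    rw [← LinearMap.ker_eq_bot, LinearMap.ker_eq_bot']
    intro w hw
    have hzero := eq_zero_of_iterate_dd_eq_zero (fun _ => extendE_of_nonpos N w.ofLp) fun k hk => by
      simpa [hB] using congr($hw ⟨k, hk⟩)
    ext j
    simpa [extendE_coe_add_one] using hzero ((j : ℤ) + 1) (by omega)
  obtain ⟨c, hc, hcB⟩ := exists_pos_mul_norm_sq_le_of_injective B hBinj
  refine ⟨c, hc, fun v => ?_⟩
  calc c * normE N v ^ 2 ≤ ‖B (WithLp.toLp 2 v)‖ ^ 2 := by rw [normE_eq_norm]; exact hcB _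
    _ = ∑ k : s, (dd^[n] (extendE N v) k) ^ 2 := by rw [hB, EuclideanSpace.real_norm_sq_eq]
    _ = _ := sum_coe_sort s fun k => (dd^[n] (extendE N v) k) ^ 2

lemma hasDerivAt_Ffun (f : ℤ → ℝ → ℝ) {k : ℤ} (hf : Continuous (f k)) (s : ℝ) :
    HasDerivAt (Ffun f k) (f k s) s :=
  (hf.integral_hasStrictDerivAt 0 s).hasDerivAt

lemma bddBelow_range_of_mul_nonneg {F f : ℝ → ℝ} (hF : ∀ s, HasDerivAt F (f s) s) {α : ℝ}
    (hα : 0 ≤ α) (hsign : ∀ u, α < |u| → 0 ≤ u * f u) : BddBelow (Set.range F) := by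
  have hcont : Continuous F := continuous_iff_continuousAt.2 fun s => (hF s).continuousAt
  have hmono : MonotoneOn F (Set.Ici α) :=
    monotoneOn_of_hasDerivWithinAt_nonneg (convex_Ici α) hcont.continuousOn
      (fun s _ => (hF s).hasDerivWithinAt) fun s hs => by
        rw [interior_Ici, Set.mem_Ioi] at hs
        have := hsign s (by rw [abs_of_pos (by linarith)]; exact hs)
        nlinarith
  have hanti : AntitoneOn F (Set.Iic (-α)) :=
    antitoneOn_of_hasDerivWithinAt_nonpos (convex_Iic (-α)) hcont.continuousOn
      (fun s _ => (hF s).hasDerivWithinAt) fun s hs => by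
        rw [interior_Iic, Set.mem_Iio] at hs
        have := hsign s (by rw [abs_of_neg (by linarith)]; linarith)
        nlinarith
  obtain ⟨m, hm⟩ := (isCompact_Icc (a := -α) (b := α)).bddBelow_image hcont.continuousOn
  have hm' : ∀ s ∈ Set.Icc (-α) α, m ≤ F s := fun s hs => hm ⟨s, hs, rfl⟩
  refine ⟨m, ?_⟩
  rintro _ ⟨s, rfl⟩
  rcases lt_or_ge s (-α) with hs | hs
  · exact (hm' _ ⟨le_rfl, by linarith⟩).trans
      (hanti (Set.mem_Iic.2 hs.le) Set.self_mem_Iic hs.le)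
  rcases le_or_gt s α with hs' | hs'
  · exact hm' s ⟨hs, hs'⟩
  · exact (hm' _ ⟨by linarith, le_rfl⟩).trans (hmono Set.self_mem_Ici (Set.mem_Ici.2 hs'.le) hs'.le)

lemma exists_le_sum_Ffun_extendE {n N : ℕ} {f : ℤ → ℝ → ℝ} (hf : ∀ k, Continuous (f k)) {α : ℝ}
    (hα : 0 ≤ α) (hsign : ∀ k ∈ Icc (1 : ℤ) N, ∀ u : ℝ, α < |u| → 0 ≤ u * f k u) :
    ∃ K, ∀ v : Fin N → ℝ, K ≤ ∑ k ∈ Icc (1 - (n : ℤ)) N, Ffun f k (extendE N v k) := by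
  have hbound : ∀ k ∈ Icc (1 - (n : ℤ)) N, ∃ m, ∀ v : Fin N → ℝ, m ≤ Ffun f k (extendE N v k) := by
    intro k hk
    rcases le_or_gt k 0 with hk0 | hk0
    · exact ⟨0, fun v => by rw [extendE_of_nonpos N v hk0, Ffun, intervalIntegral.integral_same]⟩
    obtain ⟨m, hm⟩ := bddBelow_range_of_mul_nonneg (hasDerivAt_Ffun f (hf k)) hα
      (hsign k (mem_Icc.2 ⟨hk0, (mem_Icc.1 hk).2⟩))
    exact ⟨m, fun v => hm ⟨_, rfl⟩⟩
  choose! m hm using hbound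
  exact ⟨∑ k ∈ Icc (1 - (n : ℤ)) N, m k, fun v => sum_le_sum fun k hk => hm k hk v⟩

section Functional

variable {n N : ℕ} {p : ℤ → ℝ} {F f : ℤ → ℝ → ℝ}

lemma continuous_Jfun (hF : ∀ k, Continuous (F k)) : Continuous (Jfun n N p F) := by
  have hx : ∀ k, Continuous fun v : Fin N → ℝ => extendE N v k := fun k =>
    (continuous_apply k).comp (extendₗ N).continuous_of_finiteDimensional
  have hdx : ∀ k, Continuous fun v : Fin N → ℝ => dd^[n] (extendE N v) k := fun k => by
    rw [← coe_ddₗ_pow]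
    exact (continuous_apply k).comp ((ddₗ ^ n) ∘ₗ extendₗ N).continuous_of_finiteDimensional
  exact continuous_finsetSum _ fun k _ =>
    (continuous_const.mul ((hdx k).pow 2)).sub ((hF k).comp (hx k))

lemma hasDerivAt_Jfun_add_smul (hF : ∀ k s, HasDerivAt (F k) (f k s) s) (v w : Fin N → ℝ) :
    HasDerivAt (fun t : ℝ => Jfun n N p F (v + t • w))
      (∑ k ∈ Icc (1 - (n : ℤ)) N, (p k * dd^[n] (extendE N v) k * dd^[n] (extendE N w) k
        - f k (extendE N v k) * extendE N w k)) 0 := by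
  set x := extendE N v
  set y := extendE N w
  have hline : ∀ t : ℝ, extendE N (v + t • w) = x + t • y := fun t => by
    rw [← coe_extendₗ, map_add, map_smul]; rfl
  have hdline : ∀ t : ℝ, dd^[n] (x + t • y) = dd^[n] x + t • dd^[n] y := fun t => by
    rw [← coe_ddₗ_pow, map_add, map_smul]
  simp only [Jfun, hline, hdline, Pi.add_apply, Pi.smul_apply, smul_eq_mul]
  refine HasDerivAt.fun_sum fun k _ => HasDerivAt.sub ?_ ?_
  · exact (((hasDerivAt_mul_const (dd^[n] y k)).const_add (dd^[n] x k)).pow 2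
      |>.const_mul (1 / 2 * p k)).congr_deriv (by simp; ring)
  · exact (hF k (x k)).comp_of_eq 0 ((hasDerivAt_mul_const (y k)).const_add (x k))
      (by simp)

lemma solves_of_forall_Jfun_le (hF : ∀ k s, HasDerivAt (F k) (f k s) s) {v : Fin N → ℝ}
    (hv : ∀ w, Jfun n N p F w ≤ Jfun n N p F v) : Solves n N p f v := by
  intro k hk
  obtain ⟨hk1, hkN⟩ := mem_Icc.1 hk
  obtain ⟨j, rfl⟩ : ∃ j : Fin N, (j : ℤ) + 1 = k :=
    ⟨⟨(k - 1).toNat, by omega⟩, by simp only [Int.pred_toNat]; omega⟩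
  have hmax : IsLocalMax (fun t : ℝ => Jfun n N p F (v + t • Pi.single j 1)) 0 :=
    Filter.Eventually.of_forall fun t => by simpa using hv (v + t • Pi.single j 1)
  have hcrit := hmax.hasDerivAt_eq_zero (hasDerivAt_Jfun_add_smul hF v (Pi.single j 1))
  have hsbp := sum_mul_iterate_dd_single n (fun i => p i * dd^[n] (extendE N v) i)
    (b := 1 - n) (c := N) (a := (j : ℤ) + 1) (by omega) hkN
  have hsingle : ∑ i ∈ Icc (1 - (n : ℤ)) N,
      f i (extendE N v i) * (Pi.single ((j : ℤ) + 1) 1 : ℤ → ℝ) i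
        = f ((j : ℤ) + 1) (extendE N v ((j : ℤ) + 1)) := by
    simp only [Pi.single_apply, mul_ite, mul_one, mul_zero, sum_ite_eq', mem_Icc]
    rw [if_pos ⟨by omega, hkN⟩]
  rw [extendE_single, sum_sub_distrib, hsingle, hsbp] at hcrit
  have hsq : ((-1 : ℝ) ^ n) ^ 2 = 1 := by rw [← pow_mul, pow_mul', neg_one_sq, one_pow]
  linear_combination (-1 : ℝ) ^ n * hcrit
    - dd^[n] (fun i => p i * dd^[n] (extendE N v) i) ((j : ℤ) + 1 - n) * hsq

lemma Jfun_le_of_le {pmax c K : ℝ} (hp : ∀ k ∈ Icc (1 - (n : ℤ)) N, p k ≤ pmax) (hpmax : pmax ≤ 0)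
    {v : Fin N → ℝ}
    (hc : c * normE N v ^ 2 ≤ ∑ k ∈ Icc (1 - (n : ℤ)) N, (dd^[n] (extendE N v) k) ^ 2)
    (hK : K ≤ ∑ k ∈ Icc (1 - (n : ℤ)) N, F k (extendE N v k)) :
    Jfun n N p F v ≤ pmax * c / 2 * normE N v ^ 2 - K := by
  have hquad : ∑ k ∈ Icc (1 - (n : ℤ)) N, 1 / 2 * p k * (dd^[n] (extendE N v) k) ^ 2
      ≤ pmax / 2 * ∑ k ∈ Icc (1 - (n : ℤ)) N, (dd^[n] (extendE N v) k) ^ 2 := by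
    rw [mul_sum]
    exact sum_le_sum fun k hk => by nlinarith [hp k hk, sq_nonneg (dd^[n] (extendE N v) k)]
  have hscale := mul_le_mul_of_nonpos_left hc (by linarith : pmax / 2 ≤ 0)
  rw [Jfun, sum_sub_distrib]
  linarith

end Functional

lemma antiCoerciveE_of_le_mul_normE_sq {N : ℕ} {J : (Fin N → ℝ) → ℝ} {a b : ℝ} (ha : a < 0)
    (hJ : ∀ v, J v ≤ a * normE N v ^ 2 + b) : AntiCoerciveE N J := by
  intro C
  refine ⟨√((C - b) / a), fun v hv => ?_⟩
  have hnorm : (C - b) / a ≤ normE N v ^ 2 := (Real.sqrt_le_left (Real.sqrt_nonneg _)).1 hv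
  have hscale := mul_le_mul_of_nonpos_left hnorm ha.le
  rw [mul_div_cancel₀ _ ha.ne] at hscale
  linarith [hJ v]

lemma exists_forall_le_of_antiCoerciveE {N : ℕ} {J : (Fin N → ℝ) → ℝ} (hJ : Continuous J)
    (h : AntiCoerciveE N J) : ∃ v, ∀ w, J w ≤ J v := by
  obtain ⟨R, hR⟩ := h (J 0 - 1)
  refine hJ.exists_forall_ge_of_isBounded 0 ((Metric.isBounded_closedBall (x := 0) (r := R)).subset
    fun w hw => mem_closedBall_zero_iff.2 ?_)
  by_contra! hlt
  linarith [hR w (hlt.le.trans (norm_le_normE N w)), show J 0 ≤ J w from hw]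

theorem stmt11_general (n N : ℕ) (p : ℤ → ℝ)
    (f : ℤ → ℝ → ℝ) (hf : ∀ k, Continuous (f k))
    (hp : ∀ k ∈ Finset.Icc (1 - (n : ℤ)) (N : ℤ), p k < 0)
    (α : ℝ) (hα : 0 < α)
    (hsign : ∀ k ∈ Finset.Icc (1 : ℤ) (N : ℤ), ∀ u : ℝ, α < |u| → 0 ≤ u * f k u) :
    AntiCoerciveE N (Jfun n N p (Ffun f)) ∧ ∃ v : Fin N → ℝ, Solves n N p f v := by
  have hF : ∀ k s, HasDerivAt (Ffun f k) (f k s) s := fun k => hasDerivAt_Ffun f (hf k)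
  obtain ⟨pmax, hpmax, hp_le⟩ := exists_lt_forall_le_of_forall_lt hp
  obtain ⟨c, hc, hcQ⟩ := exists_pos_mul_normE_sq_le n N
  obtain ⟨K, hK⟩ := exists_le_sum_Ffun_extendE (n := n) hf hα.le hsign
  have hJ : AntiCoerciveE N (Jfun n N p (Ffun f)) :=
    antiCoerciveE_of_le_mul_normE_sq (b := -K) (by nlinarith : pmax * c / 2 < 0) fun v => by
      linarith [Jfun_le_of_le hp_le hpmax.le (hcQ v) (hK v)]
  obtain ⟨v, hv⟩ := exists_forall_le_of_antiCoerciveE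
    (continuous_Jfun fun k => continuous_iff_continuousAt.2 fun s => (hF k s).continuousAt) hJ
  exact ⟨hJ, v, solves_of_forall_Jfun_le hF hv⟩

theorem stmt11 (n N : ℕ) (hn : 1 ≤ n) (hN : 2 ≤ N) (p : ℤ → ℝ)
    (f : ℤ → ℝ → ℝ) (hf : ∀ k, Continuous (f k))
    (hp : ∀ k ∈ Finset.Icc (1 - (n : ℤ)) (N : ℤ), p k < 0)
    (α : ℝ) (hα : 0 < α)
    (hsign : ∀ k ∈ Finset.Icc (1 : ℤ) (N : ℤ), ∀ u : ℝ, α < |u| → 0 ≤ u * f k u) :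
    AntiCoerciveE N (Jfun n N p (Ffun f)) ∧ ∃ v : Fin N → ℝ, Solves n N p f v :=
  stmt11_general n N p f hf hp α hα hsign
end
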